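/- arXiv:1912.03919 — 4 statements merged into one kernel-verified Lean document; each statement's English description precedes it below -/
import Mathlib

section
/- Let k ≥ 2, let X = {x_1,…,x_n} be a finite set, and let C = {C_1,…,C_t} be a collection of 3-element subsets of X. If there exists a subcollection C' ⊆ C such that every element of X belongs to at least one and at most k members of C', then the gadget graph G_{X,C} has a total [1,k]-dominating set; explicitly, D = (⋃_{1≤j≤t} P_j) ∪ {c_j : C_j ∈ C'} ∪ (⋃_{C_j ∉ C'} L_j) is a total [1,k]-dominating set of G_{X,C}. -/
/-- `D` is a `[1,k]`-dominating set of `G`: every vertex outside `D` is adjacent to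
at least one and at most `k` vertices of `D`. -/
def IsOneKDom {V : Type*} (G : SimpleGraph V) (k : ℕ) (D : Set V) : Prop :=
  ∀ v ∉ D, 1 ≤ {u ∈ D | G.Adj v u}.ncard ∧ {u ∈ D | G.Adj v u}.ncard ≤ k

/-- `D` is a total `[1,k]`-dominating set of `G`: every vertex is adjacent to
at least one and at most `k` vertices of `D`. -/
def IsTotalOneKDom {V : Type*} (G : SimpleGraph V) (k : ℕ) (D : Set V) : Prop :=
  ∀ v : V, 1 ≤ {u ∈ D | G.Adj v u}.ncard ∧ {u ∈ D | G.Adj v u}.ncard ≤ k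

/-- The `[1,k]`-domination number: minimum cardinality of a `[1,k]`-dominating set. -/
noncomputable def oneKDomNum {V : Type*} [Fintype V] (G : SimpleGraph V) (k : ℕ) : ℕ :=
  sInf {m | ∃ D : Set V, IsOneKDom G k D ∧ D.ncard = m}

/-- The total `[1,k]`-domination number: minimum cardinality of a total
`[1,k]`-dominating set. -/
noncomputable def totalOneKDomNum {V : Type*} [Fintype V] (G : SimpleGraph V) (k : ℕ) : ℕ :=
  sInf {m | ∃ D : Set V, IsTotalOneKDom G k D ∧ D.ncard = m}

/-- The lexicographic product `G ∘ H`. -/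
def lexProd {α β : Type*} (G : SimpleGraph α) (H : SimpleGraph β) :
    SimpleGraph (α × β) where
  Adj a b := G.Adj a.1 b.1 ∨ (a.1 = b.1 ∧ H.Adj a.2 b.2)
  symm := by
    constructor
    rintro ⟨g, h⟩ ⟨g', h'⟩ (hadj | ⟨rfl, hadj⟩)
    · exact Or.inl hadj.symm
    · exact Or.inr ⟨rfl, hadj.symm⟩
  loopless := by
    constructor
    rintro ⟨g, h⟩ (hadj | ⟨-, hadj⟩)
    · exact G.loopless.irrefl g hadj
    · exact H.loopless.irrefl h hadj

/-- Vertices of the gadget graph `G_{X,C}`: the elements `x i` of `X`, one vertex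
`c j` per set `C j`, and for each `j` the vertices `p j j'` and leaves `l j j'`. -/
inductive GadgetV (n t k : ℕ) : Type
  | x : Fin n → GadgetV n t k
  | c : Fin t → GadgetV n t k
  | p : Fin t → Fin k → GadgetV n t k
  | l : Fin t → Fin k → GadgetV n t k
  deriving DecidableEq

/-- The gadget graph `G_{X,C}`: edges `c j — p j j'`, `p j j' — l j j'`, and
`x i — c j` whenever `x i ∈ C j`. -/
def gadgetGraph (n t k : ℕ) (C : Fin t → Finset (Fin n)) :
    SimpleGraph (GadgetV n t k) :=
  SimpleGraph.fromRel (fun a b =>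
    match a, b with
    | .c j, .p j' _ => j = j'
    | .p j i, .l j' i' => j = j' ∧ i = i'
    | .x i, .c j => i ∈ C j
    | _, _ => False)

/-! The `D`-neighbourhood of every vertex is explicit. Only for `x i` does it depend on `C'`:
it is `{c j | j ∈ C', x i ∈ C j}`, of the size the cover condition bounds. Each `c j` sees the
`k` vertices of `P j`, and every other vertex sees exactly one vertex of `D`. -/

namespace GadgetV

variable {n t k : ℕ} {C : Fin t → Finset (Fin n)} {C' : Finset (Fin t)}

def totalDomSet (C' : Finset (Fin t)) : Set (GadgetV n t k) :=
  {v | ∃ j i, v = p j i} ∪ {v | ∃ j ∈ C', v = c j} ∪ {v | ∃ j ∉ C', ∃ i, v = l j i}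

theorem totalDomSet_adj_x (i : Fin n) :
    {u ∈ totalDomSet C' | (gadgetGraph n t k C).Adj (x i) u} =
      c '' ↑(C'.filter fun j => i ∈ C j) := by
  ext (_ | _ | _ | _) <;> simp [totalDomSet, gadgetGraph, and_comm, eq_comm]

theorem totalDomSet_adj_c (j : Fin t) :
    {u ∈ totalDomSet C' | (gadgetGraph n t k C).Adj (c j) u} = Set.range (p j) := by
  ext (_ | _ | _ | _) <;> simp [totalDomSet, gadgetGraph, eq_comm]

theorem totalDomSet_adj_p_of_mem {j : Fin t} (hj : j ∈ C') (i : Fin k) :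
    {u ∈ totalDomSet C' | (gadgetGraph n t k C).Adj (p j i) u} = {c j} := by
  ext (_ | _ | _ | _) <;> simp [totalDomSet, gadgetGraph, eq_comm] <;> aesop

theorem totalDomSet_adj_p_of_notMem {j : Fin t} (hj : j ∉ C') (i : Fin k) :
    {u ∈ totalDomSet C' | (gadgetGraph n t k C).Adj (p j i) u} = {l j i} := by
  ext (_ | _ | _ | _) <;> simp [totalDomSet, gadgetGraph, eq_comm] <;> aesop

theorem totalDomSet_adj_l (j : Fin t) (i : Fin k) :
    {u ∈ totalDomSet C' | (gadgetGraph n t k C).Adj (l j i) u} = {p j i} := by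
  ext (_ | _ | _ | _) <;> simp [totalDomSet, gadgetGraph, eq_comm]

end GadgetV

open GadgetV in
theorem gadgetGraph_isTotalOneKDom_general
    {n t k : ℕ} (hk : 2 ≤ k) (C : Fin t → Finset (Fin n))
    (C' : Finset (Fin t))
    (hcov : ∀ i : Fin n,
      1 ≤ (C'.filter (fun j => i ∈ C j)).card ∧ (C'.filter (fun j => i ∈ C j)).card ≤ k) :
    IsTotalOneKDom (gadgetGraph n t k C) k
      ({v : GadgetV n t k | ∃ j i, v = GadgetV.p j i} ∪
        {v : GadgetV n t k | ∃ j ∈ C', v = GadgetV.c j} ∪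
        {v : GadgetV n t k | ∃ j ∉ C', ∃ i, v = GadgetV.l j i}) := by
  have hk1 : 1 ≤ k := by omega
  change IsTotalOneKDom _ k (totalDomSet C')
  rintro (i | j | ⟨j, i⟩ | ⟨j, i⟩)
  · rw [totalDomSet_adj_x, Set.ncard_image_of_injective _ fun _ _ h => c.inj h,
      Set.ncard_coe_finset]
    exact hcov i
  · rw [totalDomSet_adj_c, ← Set.image_univ,
      Set.ncard_image_of_injective _ fun _ _ h => (p.inj h).2, Set.ncard_univ, Nat.card_fin]
    exact ⟨hk1, le_rfl⟩
  · by_cases hj : j ∈ C'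
    · simp [totalDomSet_adj_p_of_mem hj, hk1]
    · simp [totalDomSet_adj_p_of_notMem hj, hk1]
  · simp [totalDomSet_adj_l, hk1]

/-- If `C' ⊆ C` covers every element of `X` at least once and at most `k` times, then
`D = (⋃ j, P j) ∪ {c j : j ∈ C'} ∪ (⋃_{j ∉ C'} L j)` is a total `[1,k]`-dominating
set of the gadget graph `G_{X,C}`. -/
theorem gadgetGraph_isTotalOneKDom
    {n t k : ℕ} (hk : 2 ≤ k) (C : Fin t → Finset (Fin n))
    (hC3 : ∀ j, (C j).card = 3) (C' : Finset (Fin t))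
    (hcov : ∀ i : Fin n,
      1 ≤ (C'.filter (fun j => i ∈ C j)).card ∧ (C'.filter (fun j => i ∈ C j)).card ≤ k) :
    IsTotalOneKDom (gadgetGraph n t k C) k
      ({v : GadgetV n t k | ∃ j i, v = GadgetV.p j i} ∪
        {v : GadgetV n t k | ∃ j ∈ C', v = GadgetV.c j} ∪
        {v : GadgetV n t k | ∃ j ∉ C', ∃ i, v = GadgetV.l j i}) :=
  gadgetGraph_isTotalOneKDom_general hk C C' hcov
end

section
/- Let k ≥ 2, let X = {x_1,…,x_n} be a finite set, and let C = {C_1,…,C_t} be a collection of 3-element subsets of X. Then every total [1,k]-dominating set D of the gadget graph G_{X,C} contains all vertices p_{j,j'} (1 ≤ j ≤ t, 1 ≤ j' ≤ k) and contains no vertex of X, i.e., ⋃_{j=1}^{t} P_j ⊆ D and D ∩ X = ∅. -/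
/-!
Each leaf `l j j'` has `p j j'` as its only neighbour, so total domination forces every
`p j j'` into `D`. Then `c j` already has the `k` vertices `p j _` as neighbours in `D`, so no
further neighbour of `c j` lies in `D`. Every `x i` is dominated, hence adjacent to some `c j`,
so it cannot lie in `D`.
-/

namespace IsTotalOneKDom

variable {V : Type*} {G : SimpleGraph V} {k : ℕ} {D : Set V}

theorem exists_mem_adj (hD : IsTotalOneKDom G k D) (v : V) : ∃ u ∈ D, G.Adj v u :=
  Set.nonempty_of_ncard_ne_zero (Nat.one_le_iff_ne_zero.1 (hD v).1)

theorem mem_of_adj_iff_eq (hD : IsTotalOneKDom G k D) {v u : V}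
    (hv : ∀ w, G.Adj v w ↔ w = u) : u ∈ D := by
  obtain ⟨w, hwD, hvw⟩ := hD.exists_mem_adj v
  rwa [(hv w).1 hvw] at hwD

theorem ncard_le_of_subset (hD : IsTotalOneKDom G k D) {v : V} {S : Set V}
    (hS : S ⊆ {u ∈ D | G.Adj v u}) : S.ncard ≤ k :=
  (Set.ncard_le_ncard hS (Set.finite_of_ncard_pos (hD v).1)).trans (hD v).2

end IsTotalOneKDom

namespace GadgetV

variable {n t k : ℕ}

theorem p_injective (j : Fin t) : Function.Injective (p j : Fin k → GadgetV n t k) :=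
  fun _ _ h => (p.inj h).2

theorem ncard_insert_x_range_p (i : Fin n) (j : Fin t) :
    (insert (x i) (Set.range (p j : Fin k → GadgetV n t k))).ncard = k + 1 := by
  rw [Set.ncard_insert_of_notMem (by rintro ⟨_, ⟨⟩⟩), Set.ncard_range_of_injective (p_injective j),
    Nat.card_eq_fintype_card, Fintype.card_fin]

end GadgetV

namespace gadgetGraph

open GadgetV

variable {n t k : ℕ} (C : Fin t → Finset (Fin n))

theorem adj_l_iff (j : Fin t) (i : Fin k) (u : GadgetV n t k) :
    (gadgetGraph n t k C).Adj (l j i) u ↔ u = p j i := by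
  cases u <;> simp [gadgetGraph, SimpleGraph.fromRel_adj]

theorem adj_x_iff (i : Fin n) (u : GadgetV n t k) :
    (gadgetGraph n t k C).Adj (x i) u ↔ ∃ j, u = c j ∧ i ∈ C j := by
  cases u <;> simp [gadgetGraph, SimpleGraph.fromRel_adj]

theorem adj_c_p (j : Fin t) (i : Fin k) : (gadgetGraph n t k C).Adj (c j) (p j i) := by
  simp [gadgetGraph, SimpleGraph.fromRel_adj]

variable {C} {D : Set (GadgetV n t k)}

theorem p_mem_of_isTotalOneKDom (hD : IsTotalOneKDom (gadgetGraph n t k C) k D)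
    (j : Fin t) (i : Fin k) : p j i ∈ D :=
  hD.mem_of_adj_iff_eq (adj_l_iff C j i)

theorem x_notMem_of_isTotalOneKDom (hD : IsTotalOneKDom (gadgetGraph n t k C) k D)
    (i : Fin n) : x i ∉ D := by
  intro hxD
  obtain ⟨_, -, hadj⟩ := hD.exists_mem_adj (x i)
  obtain ⟨j, rfl, hij⟩ := (adj_x_iff C i _).1 hadj
  have hsub : insert (x i) (Set.range (p j)) ⊆ {u ∈ D | (gadgetGraph n t k C).Adj (c j) u} := by
    rintro v (rfl | ⟨i', rfl⟩)
    · exact ⟨hxD, ((adj_x_iff C i (c j)).2 ⟨j, rfl, hij⟩).symm⟩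
    · exact ⟨p_mem_of_isTotalOneKDom hD j i', adj_c_p C j i'⟩
  have := hD.ncard_le_of_subset hsub
  rw [ncard_insert_x_range_p] at this
  omega

end gadgetGraph

theorem gadgetGraph_totalOneKDom_structure_general
    {n t k : ℕ} (C : Fin t → Finset (Fin n))
    (D : Set (GadgetV n t k)) (hD : IsTotalOneKDom (gadgetGraph n t k C) k D) :
    (∀ (j : Fin t) (i : Fin k), GadgetV.p j i ∈ D) ∧ (∀ i : Fin n, GadgetV.x i ∉ D) :=
  ⟨gadgetGraph.p_mem_of_isTotalOneKDom hD, gadgetGraph.x_notMem_of_isTotalOneKDom hD⟩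

/-- Every total `[1,k]`-dominating set of the gadget graph `G_{X,C}` contains all the
vertices `p j j'` and no vertex of `X`. -/
theorem gadgetGraph_totalOneKDom_structure
    {n t k : ℕ} (hk : 2 ≤ k) (C : Fin t → Finset (Fin n))
    (hC3 : ∀ j, (C j).card = 3)
    (D : Set (GadgetV n t k)) (hD : IsTotalOneKDom (gadgetGraph n t k C) k D) :
    (∀ (j : Fin t) (i : Fin k), GadgetV.p j i ∈ D) ∧ (∀ i : Fin n, GadgetV.x i ∉ D) :=
  gadgetGraph_totalOneKDom_structure_general C D hD
end

section
/- Let G be a finite simple graph on at least two vertices and let H be a finite simple graph with at least one vertex. The lexicographic product G ∘ H is connected and bipartite if and only if G is connected and bipartite and H is edgeless. -/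
/-!
Projecting to the first coordinate turns walks of `G ∘ H` into walks of `G`, and every layer
`G × {h}` is a copy of `G`; so `G ∘ H` is connected exactly when `G` is (for nontrivial `G`),
since a neighbour `g''` of `g'` in `G` is adjacent to every vertex `(g', h')`. An edge `uv` of `G`
and an edge `xy` of `H` span the triangle `(u,x), (u,y), (v,x)`, so bipartiteness forces `H`
to be edgeless, and then `Prod.fst` is a homomorphism `G ∘ H → G` carrying colourings back.
-/

namespace SimpleGraph

variable {α β : Type*} (G : SimpleGraph α) (H : SimpleGraph β)

def lexProdSection (b : β) : G →g lexProd G H where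
  toFun g := (g, b)
  map_rel' := Or.inl

def lexProdBotFst : lexProd G (⊥ : SimpleGraph β) →g G where
  toFun := Prod.fst
  map_rel' := fun h ↦ h.resolve_right fun h' ↦ h'.2

variable {G H}

theorem Reachable.fst_of_lexProd {a b : α × β} (h : (lexProd G H).Reachable a b) :
    G.Reachable a.1 b.1 := by
  rw [reachable_iff_reflTransGen] at h ⊢
  refine Relation.ReflTransGen.lift' Prod.fst (fun a b hab ↦ ?_) _ _ h
  show Relation.ReflTransGen G.Adj a.1 b.1
  rcases hab with hG | ⟨heq, -⟩
  · exact .single hG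
  · exact heq ▸ .refl

theorem Preconnected.of_lexProd [Nonempty β] (h : (lexProd G H).Preconnected) :
    G.Preconnected := fun g g' ↦
  (h (g, Classical.arbitrary β) (g', Classical.arbitrary β)).fst_of_lexProd

theorem connected_lexProd [Nontrivial α] [Nonempty β] (hG : G.Connected) (H : SimpleGraph β) :
    (lexProd G H).Connected := by
  refine .mk fun ⟨g, h⟩ ⟨g', h'⟩ ↦ ?_
  obtain ⟨g'', hg''⟩ := hG.preconnected.exists_adj_of_nontrivial g'
  have hlayer : (lexProd G H).Reachable (g, h) (g'', h) :=
    (hG.preconnected g g'').map (lexProdSection G H h)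
  exact hlayer.trans (Adj.reachable (Or.inl hg''.symm))

theorem not_colorable_two_lexProd {u v : α} {x y : β} (huv : G.Adj u v) (hxy : H.Adj x y) :
    ¬ (lexProd G H).Colorable 2 := by
  classical
  exact fun hcol ↦ hcol.cliqueFree (by norm_num : 2 < 3) {(u, x), (u, y), (v, x)}
    (is3Clique_triple_iff.2 ⟨Or.inr ⟨rfl, hxy⟩, Or.inl huv, Or.inl huv⟩)

end SimpleGraph

theorem lexProd_connected_colorable_two_iff_general
    {α β : Type*} [Fintype α] [Nonempty β]
    (hα : 2 ≤ Fintype.card α)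
    (G : SimpleGraph α) (H : SimpleGraph β) :
    ((lexProd G H).Connected ∧ (lexProd G H).Colorable 2) ↔
      (G.Connected ∧ G.Colorable 2 ∧ H = ⊥) := by
  have : Nontrivial α := Fintype.one_lt_card_iff_nontrivial.mp hα
  constructor
  · rintro ⟨hconn, hcol⟩
    have hG : G.Preconnected := hconn.preconnected.of_lexProd
    obtain ⟨v, huv⟩ := hG.exists_adj_of_nontrivial (Classical.arbitrary α)
    refine ⟨⟨hG⟩, hcol.of_hom (SimpleGraph.lexProdSection G H (Classical.arbitrary β)), ?_⟩
    exact SimpleGraph.eq_bot_iff_forall_not_adj.2 fun x y hxy ↦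
      SimpleGraph.not_colorable_two_lexProd huv hxy hcol
  · rintro ⟨hG, hcol, rfl⟩
    exact ⟨SimpleGraph.connected_lexProd hG ⊥, hcol.of_hom (SimpleGraph.lexProdBotFst G)⟩

/-- For a finite graph `G` on at least two vertices and a finite graph `H` with at
least one vertex, `G ∘ H` is connected and bipartite iff `G` is connected and
bipartite and `H` is edgeless. -/
theorem lexProd_connected_colorable_two_iff
    {α β : Type*} [Fintype α] [Fintype β] [Nonempty β]
    (hα : 2 ≤ Fintype.card α)
    (G : SimpleGraph α) (H : SimpleGraph β) :
    ((lexProd G H).Connected ∧ (lexProd G H).Colorable 2) ↔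
      (G.Connected ∧ G.Colorable 2 ∧ H = ⊥) :=
  lexProd_connected_colorable_two_iff_general hα G H
end

section
/- Let k ≥ 1, let G be a finite simple graph, let K̄_{k+1} be the edgeless graph on k+1 vertices, and let D be a [1,k]-dominating set of the lexicographic product G ∘ K̄_{k+1}. If a vertex g of G has k+1 pairwise distinct neighbors g_1, …, g_{k+1} in G such that D intersects the H-layer H^{g_i} for every i = 1, …, k+1, then D contains the entire H-layer H^g over g. -/
/- The lower bound of `IsOneKDom` makes the `D`-neighbourhood of `v` nonempty, hence finite, so
its `ncard` (which is `0` on infinite sets) really counts it. -/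
theorem IsOneKDom.mem_of_injective_adj {V ι : Type*} [Finite ι] {G : SimpleGraph V} {k : ℕ}
    {D : Set V} (hD : IsOneKDom G k D) {v : V} (f : ι → V) (hf : Function.Injective f)
    (hfD : ∀ i, f i ∈ D) (hadj : ∀ i, G.Adj v (f i)) (hcard : k < Nat.card ι) : v ∈ D := by
  by_contra hv
  obtain ⟨hpos, hle⟩ := hD v hv
  have hsub : Set.range f ⊆ {u ∈ D | G.Adj v u} := by
    rintro u ⟨i, rfl⟩
    exact ⟨hfD i, hadj i⟩
  have := Set.ncard_le_ncard hsub (Set.finite_of_ncard_pos hpos)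
  rw [Set.ncard_range_of_injective hf] at this
  omega

theorem layer_subset_of_neighbors_meet_general
    {α : Type*} (k : ℕ) (G : SimpleGraph α)
    (D : Set (α × Fin (k + 1)))
    (hD : IsOneKDom (lexProd G (⊥ : SimpleGraph (Fin (k + 1)))) k D)
    (g : α) (gs : Fin (k + 1) → α) (hinj : Function.Injective gs)
    (hadj : ∀ i, G.Adj g (gs i))
    (hmeet : ∀ i, ∃ h : Fin (k + 1), (gs i, h) ∈ D) :
    ∀ h : Fin (k + 1), (g, h) ∈ D := by
  intro h
  choose hs hhs using hmeet
  have hinj' : Function.Injective fun i => (gs i, hs i) :=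
    fun i j hij => hinj (congrArg Prod.fst hij)
  exact hD.mem_of_injective_adj _ hinj' hhs (fun i => Or.inl (hadj i)) (by simp)

/-- If a vertex `g` of `G` has `k+1` pairwise distinct neighbours whose layers all
meet a `[1,k]`-dominating set `D` of `G ∘ K̄_(k+1)`, then `D` contains the whole
layer over `g`. -/
theorem layer_subset_of_neighbors_meet
    {α : Type*} [Fintype α] (k : ℕ) (hk : 1 ≤ k) (G : SimpleGraph α)
    (D : Set (α × Fin (k + 1)))
    (hD : IsOneKDom (lexProd G (⊥ : SimpleGraph (Fin (k + 1)))) k D)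
    (g : α) (gs : Fin (k + 1) → α) (hinj : Function.Injective gs)
    (hadj : ∀ i, G.Adj g (gs i))
    (hmeet : ∀ i, ∃ h : Fin (k + 1), (gs i, h) ∈ D) :
    ∀ h : Fin (k + 1), (g, h) ∈ D :=
  layer_subset_of_neighbors_meet_general k G D hD g gs hinj hadj hmeet
end
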